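/- arXiv:1603.05043 — 5 statements merged into one kernel-verified Lean document; each statement's English description precedes it below -/
import Mathlib

section
/- Let V be a 4-dimensional real inner product space with a (possibly indefinite) bilinear form g, equipped with an almost complex structure F satisfying F² = -id and g(FX, FY) = g(X,Y). If a symmetric bilinear form S satisfies S(FX, FY) = S(X,Y), and S(X,Y) - (r/2)g(X,Y) + λg(X,Y) = k[(σ+p)ω(X)ω(Y) + p·g(X,Y)] for all X,Y, where ω(X) = g(X,ρ) for a fixed vector ρ with g(ρ,ρ) = -1 and k ≠ 0, then σ + p = 0. -/
/-- On a 4-dimensional Kählerian space-time, the Einstein equation with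
cosmological constant for a perfect fluid forces `σ + p = 0`. -/
theorem perfect_fluid_kahler_sigma_add_p_eq_zero
    {V : Type*} [AddCommGroup V] [Module ℝ V]
    (hdim : Module.finrank ℝ V = 4)
    (g S : V →ₗ[ℝ] V →ₗ[ℝ] ℝ)
    (hgsymm : ∀ X Y, g X Y = g Y X)
    (F : V →ₗ[ℝ] V)
    (hF2 : ∀ X, F (F X) = -X)
    (hFg : ∀ X Y, g (F X) (F Y) = g X Y)
    (hSsymm : ∀ X Y, S X Y = S Y X)
    (hSF : ∀ X Y, S (F X) (F Y) = S X Y)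
    (ρ : V) (hρ : g ρ ρ = -1)
    (r lam k σ p : ℝ) (hk : k ≠ 0)
    (hEinstein : ∀ X Y, S X Y - r / 2 * g X Y + lam * g X Y
        = k * ((σ + p) * g X ρ * g Y ρ + p * g X Y)) :
    σ + p = 0 := by
  have hω : g (F ρ) ρ = 0 := by
    have h1 : g (F (F ρ)) (F ρ) = g (F ρ) ρ := hFg (F ρ) ρ
    rw [hF2] at h1
    simp only [map_neg, LinearMap.neg_apply] at h1
    have := hgsymm ρ (F ρ)
    linarith
  have h1 := hEinstein (F ρ) (F ρ)
  have h2 := hEinstein ρ ρ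
  rw [hSF, hFg, hω] at h1
  rw [hρ] at h1 h2
  have : k * (σ + p) = 0 := by nlinarith
  rcases mul_eq_zero.mp this with h | h
  · exact absurd h hk
  · exact h
end

section
/- Let V be a 4-dimensional real inner product space with nondegenerate metric g and orthonormal-type basis e₁,...,e₄ (with signs εᵢ = g(eᵢ,eᵢ) = ±1). Suppose R is a curvature-type (0,4) tensor with Ricci contraction S(X,V) = Σᵢ εᵢ R(X, eᵢ, eᵢ, V) satisfying S = (r/4)g, and suppose ρ, with ω(X) = g(X,ρ), and an almost complex structure F (F² = -id, g(FX,FY) = g(X,Y), R(FY,FZ,U,V) = R(Y,Z,U,V)) satisfy: (r/4)ω(Y)g(X,V) - R(Y,X,V,ρ) = (r/4)ω(FY)g(X,FV) + R(FY,X,V,Fρ) for all X,Y,V. Then S(Y,ρ) = (r/2)ω(Y), i.e., ρ is an eigenvector of the Ricci operator with eigenvalue r/2. -/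
/-! Contracting the key identity over an orthonormal frame `X = W = eᵢ` turns its left side into
`4 (r/4) ω(Y) - S(Y, ρ)` and its right side into `S(FY, Fρ)`, the term `g(eᵢ, F eᵢ)` vanishing
because `F` is skew. Since `S = (r/4) g` and `F` is a `g`-isometry, `S(FY, Fρ) = S(Y, ρ)`, whence
`2 S(Y, ρ) = r ω(Y)`. -/

section Contraction

variable {ι V : Type*} [Fintype ι] [AddCommGroup V] [Module ℝ V]

theorem apply_map_self_eq_zero_of_isometry_of_sq_eq_neg (g : V →ₗ[ℝ] V →ₗ[ℝ] ℝ)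
    (hgsymm : ∀ X Y, g X Y = g Y X) (F : V →ₗ[ℝ] V) (hF2 : ∀ X, F (F X) = -X)
    (hFg : ∀ X Y, g (F X) (F Y) = g X Y) (X : V) : g X (F X) = 0 := by
  have h := hFg X (F X)
  rw [hF2, map_neg, hgsymm (F X) X] at h
  linarith

theorem sum_sign_mul_apply_self (g : V →ₗ[ℝ] V →ₗ[ℝ] ℝ) (v : ι → V) (ε : ι → ℝ)
    (hε : ∀ i, ε i = 1 ∨ ε i = -1) (hdiag : ∀ i, g (v i) (v i) = ε i) :
    ∑ i, ε i * g (v i) (v i) = Fintype.card ι := by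
  have hsq : ∀ i, ε i * g (v i) (v i) = 1 := fun i => by
    rcases hε i with h | h <;> rw [hdiag, h] <;> norm_num
  simp [hsq]

theorem card_mul_sub_ricci_eq_ricci_map (g S : V →ₗ[ℝ] V →ₗ[ℝ] ℝ)
    (hgsymm : ∀ X Y, g X Y = g Y X) (v : ι → V) (ε : ι → ℝ)
    (hε : ∀ i, ε i = 1 ∨ ε i = -1) (hdiag : ∀ i, g (v i) (v i) = ε i)
    (R : V → V → V → V → ℝ) (hRic : ∀ X W, S X W = ∑ i, ε i * R X (v i) (v i) W)
    (F : V →ₗ[ℝ] V) (hF2 : ∀ X, F (F X) = -X) (hFg : ∀ X Y, g (F X) (F Y) = g X Y)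
    (c : ℝ) (Y ρ : V)
    (hkey : ∀ X W, c * g Y ρ * g X W - R Y X W ρ
        = c * g (F Y) ρ * g X (F W) + R (F Y) X W (F ρ)) :
    Fintype.card ι * c * g Y ρ - S Y ρ = S (F Y) (F ρ) := by
  have hskew := apply_map_self_eq_zero_of_isometry_of_sq_eq_neg g hgsymm F hF2 hFg
  calc Fintype.card ι * c * g Y ρ - S Y ρ
      = ∑ i, ε i * (c * g Y ρ * g (v i) (v i) - R Y (v i) (v i) ρ) := by
        simp only [mul_sub, Finset.sum_sub_distrib, hRic, ← sum_sign_mul_apply_self g v ε hε hdiag,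
          Finset.sum_mul]
        congr 1
        exact Finset.sum_congr rfl fun i _ => by ring
    _ = ∑ i, ε i * (c * g (F Y) ρ * g (v i) (F (v i)) + R (F Y) (v i) (v i) (F ρ)) :=
        Finset.sum_congr rfl fun i _ => by rw [hkey]
    _ = S (F Y) (F ρ) := by simp [hskew, hRic]

end Contraction

theorem weakly_symmetric_ricci_eigenvector_general
    {V : Type*} [AddCommGroup V] [Module ℝ V]
    (g S : V →ₗ[ℝ] V →ₗ[ℝ] ℝ)
    (hgsymm : ∀ X Y, g X Y = g Y X)
    (b : Module.Basis (Fin 4) ℝ V) (ε : Fin 4 → ℝ)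
    (hε : ∀ i, ε i = 1 ∨ ε i = -1)
    (hortho : ∀ i j, g (b i) (b j) = if i = j then ε i else 0)
    (R : V → V → V → V → ℝ)
    (hRic : ∀ X W, S X W = ∑ i, ε i * R X (b i) (b i) W)
    (r : ℝ) (hS : ∀ X Y, S X Y = r / 4 * g X Y)
    (ρ : V)
    (F : V →ₗ[ℝ] V)
    (hF2 : ∀ X, F (F X) = -X)
    (hFg : ∀ X Y, g (F X) (F Y) = g X Y)
    (hkey : ∀ X Y W, r / 4 * g Y ρ * g X W - R Y X W ρ
        = r / 4 * g (F Y) ρ * g X (F W) + R (F Y) X W (F ρ)) :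
    ∀ Y, S Y ρ = r / 2 * g Y ρ := by
  intro Y
  have hdiag : ∀ i, g (b i) (b i) = ε i := fun i => by simp [hortho]
  have hcontr := card_mul_sub_ricci_eq_ricci_map g S hgsymm b ε hε hdiag R hRic F hF2 hFg
    (r / 4) Y ρ fun X W => hkey X Y W
  have hinv : S (F Y) (F ρ) = S Y ρ := by rw [hS, hS, hFg]
  rw [hinv, Fintype.card_fin] at hcontr
  linarith

/-- In a weakly symmetric perfect fluid Kähler space-time, `ρ` is an
eigenvector of the Ricci tensor with eigenvalue `r/2`:
`S(Y,ρ) = (r/2) ω(Y)`. -/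
theorem weakly_symmetric_ricci_eigenvector
    {V : Type*} [AddCommGroup V] [Module ℝ V]
    (g S : V →ₗ[ℝ] V →ₗ[ℝ] ℝ)
    (hgsymm : ∀ X Y, g X Y = g Y X)
    (hgnd : ∀ X, (∀ Y, g X Y = 0) → X = 0)
    (b : Module.Basis (Fin 4) ℝ V) (ε : Fin 4 → ℝ)
    (hε : ∀ i, ε i = 1 ∨ ε i = -1)
    (hortho : ∀ i j, g (b i) (b j) = if i = j then ε i else 0)
    (R : V → V → V → V → ℝ)
    (hR1 : ∀ X Y Z T, R X Y Z T = -R Y X Z T)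
    (hR2 : ∀ X Y Z T, R X Y Z T = -R X Y T Z)
    (hR3 : ∀ X Y Z T, R X Y Z T = R Z T X Y)
    (hRic : ∀ X W, S X W = ∑ i, ε i * R X (b i) (b i) W)
    (r : ℝ) (hS : ∀ X Y, S X Y = r / 4 * g X Y)
    (ρ : V) (hρ : g ρ ρ = -1)
    (F : V →ₗ[ℝ] V)
    (hF2 : ∀ X, F (F X) = -X)
    (hFg : ∀ X Y, g (F X) (F Y) = g X Y)
    (hRF : ∀ Y Z U W, R (F Y) (F Z) U W = R Y Z U W)
    (hkey : ∀ X Y W, r / 4 * g Y ρ * g X W - R Y X W ρ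
        = r / 4 * g (F Y) ρ * g X (F W) + R (F Y) X W (F ρ)) :
    ∀ Y, S Y ρ = r / 2 * g Y ρ :=
  weakly_symmetric_ricci_eigenvector_general g S hgsymm b ε hε hortho R hRic r hS ρ F hF2 hFg hkey
end

section
/- Let V be a 4-dimensional real inner product space with nondegenerate metric g and pseudo-orthonormal basis e₁,...,e₄ with εᵢ = g(eᵢ,eᵢ). Let R be a curvature-type tensor with Ricci tensor S(Z,U) = Σᵢ εᵢ R(eᵢ, Z, U, eᵢ) satisfying S = (r/4)g with r the scalar curvature, let α, ρ ∈ V with A(Y) = g(Y,α), ω(Y) = g(Y,ρ), g(ρ,ρ) = -1, and suppose R(Y,Z,U,α) + ω(Y)S(Z,U) - ω(Z)S(Y,U) + R(Y,Z,U,ρ) = 0 for all Y,Z,U. Then r·[g(α,ρ) - 4] = 0; hence either r = 0 or g(α,ρ) = 4. -/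
/-!
Contracting the weak-symmetry identity over `Z = U = eᵢ` (with weights `εᵢ`) turns both curvature
terms into Ricci terms, by pair symmetry of `R`:
`S(α,Y) + r ω(Y) - Σ εᵢ ω(eᵢ) S(Y,eᵢ) + S(ρ,Y) = 0`.
For `S = (r/4) g` and `Y = ρ` the last two terms are both `(r/4) g(ρ,ρ)` and cancel, leaving
`(r/4) g(α,ρ) - r = 0`.
-/

open Finset

theorem apply_eq_sum_repr_mul_apply_basis {𝕜 V ι : Type*} [CommRing 𝕜] [AddCommGroup V]
    [Module 𝕜 V] [Fintype ι] (g : V →ₗ[𝕜] V →ₗ[𝕜] 𝕜) (b : Module.Basis ι 𝕜 V)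
    (Y w : V) : g Y w = ∑ i, b.repr w i * g Y (b i) := by
  conv_lhs => rw [← b.sum_repr w]
  simp only [map_sum, map_smul, smul_eq_mul]

section PseudoOrthonormal

variable {𝕜 V ι : Type*} [CommRing 𝕜] [AddCommGroup V] [Module 𝕜 V] [Fintype ι] [DecidableEq ι]
  {g : V →ₗ[𝕜] V →ₗ[𝕜] 𝕜} {b : Module.Basis ι 𝕜 V} {ε : ι → 𝕜}

theorem apply_basis_left_eq_mul_repr
    (hortho : ∀ i j, g (b i) (b j) = if i = j then ε i else 0) (i : ι) (w : V) :
    g (b i) w = ε i * b.repr w i := by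
  rw [apply_eq_sum_repr_mul_apply_basis g b]
  simp [hortho, mul_comm]

theorem sum_mul_apply_basis_mul_apply_basis (hε : ∀ i, ε i * ε i = 1)
    (hortho : ∀ i j, g (b i) (b j) = if i = j then ε i else 0) (Y w : V) :
    ∑ i, ε i * g (b i) w * g Y (b i) = g Y w := by
  rw [apply_eq_sum_repr_mul_apply_basis g b Y w]
  refine sum_congr rfl fun i _ => ?_
  rw [apply_basis_left_eq_mul_repr hortho]
  linear_combination (b.repr w i * g Y (b i)) * hε i

end PseudoOrthonormal

theorem weakly_symmetric_contraction {𝕜 V ι : Type*} [CommRing 𝕜] [AddCommGroup V]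
    [Module 𝕜 V] [Fintype ι] (g S : V →ₗ[𝕜] V →ₗ[𝕜] 𝕜) (e : ι → V) (ε : ι → 𝕜)
    (R : V → V → V → V → 𝕜) (hR : ∀ X Y Z T, R X Y Z T = R Z T X Y)
    (hRic : ∀ Z U, S Z U = ∑ i, ε i * R (e i) Z U (e i))
    (r : 𝕜) (hr : r = ∑ i, ε i * S (e i) (e i)) (α ρ : V)
    (hkey : ∀ Y Z U, R Y Z U α + g Y ρ * S Z U - g Z ρ * S Y U + R Y Z U ρ = 0) (Y : V) :
    S α Y + r * g Y ρ - ∑ i, ε i * g (e i) ρ * S Y (e i) + S ρ Y = 0 := by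
  have hricci : ∀ X, S X Y = ∑ i, ε i * R Y (e i) (e i) X := fun X => by
    simp only [hR Y, hRic]
  rw [hricci α, hricci ρ, hr, sum_mul, ← sum_add_distrib, ← sum_sub_distrib,
    ← sum_add_distrib]
  exact sum_eq_zero fun i _ => by linear_combination ε i * hkey Y (e i) (e i)

theorem weakly_symmetric_scalar_or_inner_general
    {V : Type*} [AddCommGroup V] [Module ℝ V]
    (g S : V →ₗ[ℝ] V →ₗ[ℝ] ℝ)
    (b : Module.Basis (Fin 4) ℝ V) (ε : Fin 4 → ℝ)
    (hε : ∀ i, ε i = 1 ∨ ε i = -1)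
    (hortho : ∀ i j, g (b i) (b j) = if i = j then ε i else 0)
    (R : V → V → V → V → ℝ)
    (hR3 : ∀ X Y Z T, R X Y Z T = R Z T X Y)
    (hRic : ∀ Z U, S Z U = ∑ i, ε i * R (b i) Z U (b i))
    (r : ℝ) (hr : r = ∑ i, ε i * S (b i) (b i))
    (hS : ∀ X Y, S X Y = r / 4 * g X Y)
    (α ρ : V) (hρ : g ρ ρ = -1)
    (hkey : ∀ Y Z U, R Y Z U α + g Y ρ * S Z U - g Z ρ * S Y U
        + R Y Z U ρ = 0) :
    r * (g α ρ - 4) = 0 := by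
  have hε2 : ∀ i, ε i * ε i = 1 := fun i => by rcases hε i with h | h <;> simp [h]
  have hcontr := weakly_symmetric_contraction g S b ε R hR3 hRic r hr α ρ hkey ρ
  have hsum : ∑ i, ε i * g (b i) ρ * S ρ (b i) = r / 4 * g ρ ρ := by
    simp only [hS ρ, ← sum_mul_apply_basis_mul_apply_basis hε2 hortho ρ ρ, mul_sum]
    exact sum_congr rfl fun i _ => by ring
  rw [hsum, hS α ρ, hS ρ ρ, hρ] at hcontr
  linear_combination 4 * hcontr

/-- For a weakly symmetric perfect fluid Kähler space-time, either the
scalar curvature vanishes or the associated vector fields satisfy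
`g(α,ρ) = 4`; algebraically, `r (g(α,ρ) - 4) = 0`. -/
theorem weakly_symmetric_scalar_or_inner
    {V : Type*} [AddCommGroup V] [Module ℝ V]
    (g S : V →ₗ[ℝ] V →ₗ[ℝ] ℝ)
    (hgsymm : ∀ X Y, g X Y = g Y X)
    (hgnd : ∀ X, (∀ Y, g X Y = 0) → X = 0)
    (b : Module.Basis (Fin 4) ℝ V) (ε : Fin 4 → ℝ)
    (hε : ∀ i, ε i = 1 ∨ ε i = -1)
    (hortho : ∀ i j, g (b i) (b j) = if i = j then ε i else 0)
    (R : V → V → V → V → ℝ)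
    (hR1 : ∀ X Y Z T, R X Y Z T = -R Y X Z T)
    (hR2 : ∀ X Y Z T, R X Y Z T = -R X Y T Z)
    (hR3 : ∀ X Y Z T, R X Y Z T = R Z T X Y)
    (hRic : ∀ Z U, S Z U = ∑ i, ε i * R (b i) Z U (b i))
    (r : ℝ) (hr : r = ∑ i, ε i * S (b i) (b i))
    (hS : ∀ X Y, S X Y = r / 4 * g X Y)
    (α ρ : V) (hρ : g ρ ρ = -1)
    (hkey : ∀ Y Z U, R Y Z U α + g Y ρ * S Z U - g Z ρ * S Y U
        + R Y Z U ρ = 0) :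
    r * (g α ρ - 4) = 0 :=
  weakly_symmetric_scalar_or_inner_general g S b ε hε hortho R hR3 hRic r hr hS α ρ hρ hkey
end

section
/- Let V be a 4-dimensional real inner product space with nondegenerate symmetric bilinear form g, α, ρ ∈ V with g(ρ,ρ) = -1, A(X) = g(X,α), ω(X) = g(X,ρ), and suppose S = (r/4)g with r ≠ 0 and A(X)S(Y,Z) + ω(Y)S(Z,X) + ω(Z)S(X,Y) = 0 for all X,Y,Z. If additionally there is an isometric almost complex structure F on V (F² = -id, g(FX,FY) = g(X,Y)), then a contradiction follows; i.e., no such data exist. -/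
/-- There is no weakly Ricci symmetric perfect fluid Kähler space-time
satisfying the Einstein equation with cosmological constant and having
nonzero scalar curvature. -/
theorem no_weakly_ricci_symmetric_nonzero_scalar
    {V : Type*} [AddCommGroup V] [Module ℝ V]
    (hdim : Module.finrank ℝ V = 4)
    (g S : V →ₗ[ℝ] V →ₗ[ℝ] ℝ)
    (hgsymm : ∀ X Y, g X Y = g Y X)
    (hgnd : ∀ X, (∀ Y, g X Y = 0) → X = 0)
    (α ρ : V) (hρ : g ρ ρ = -1)
    (r : ℝ) (hr : r ≠ 0)
    (hS : ∀ X Y, S X Y = r / 4 * g X Y)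
    (hWRS : ∀ X Y Z, g X α * S Y Z + g Y ρ * S Z X + g Z ρ * S X Y = 0)
    (F : V →ₗ[ℝ] V)
    (hF2 : ∀ X, F (F X) = -X)
    (hFg : ∀ X Y, g (F X) (F Y) = g X Y) :
    False := by
  have key : ∀ X Y Z : V, g X α * g Y Z + g Y ρ * g Z X + g Z ρ * g X Y = 0 := by
    intro X Y Z
    have h := hWRS X Y Z
    simp only [hS] at h
    have h4 : r / 4 ≠ 0 := by positivity
    have : r / 4 * (g X α * g Y Z + g Y ρ * g Z X + g Z ρ * g X Y) = 0 := by ring_nf; linarith [h]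
    exact (mul_eq_zero.mp this).resolve_left h4
  have hA : g ρ α = 2 := by
    have h := key ρ ρ ρ
    rw [hρ] at h
    linarith
  have hskew : g (F ρ) ρ = 0 := by
    have h1 : g (F ρ) ρ = -g ρ (F ρ) := by
      have := hFg (F ρ) ρ
      rw [hF2] at this
      have hn : g (-ρ) (F ρ) = -g ρ (F ρ) := by simp
      linarith [this, hn]
    have h2 := hgsymm ρ (F ρ)
    linarith
  have h := key ρ (F ρ) (F ρ)
  rw [hFg, hρ, hA, hgsymm ρ (F ρ)] at h
  rw [hskew] at h
  linarith
end

section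
/- Let V be a 4-dimensional real inner product space with nondegenerate metric g, pseudo-orthonormal basis e₁,...,e₄ with εᵢ = g(eᵢ,eᵢ), and ρ ∈ V with g(ρ,ρ) = -1, ω(X) = g(X,ρ). Suppose F is an endomorphism with F² = -id and g(FX,FY) = g(X,Y), and suppose ω(FY)g(X,FZ) - ω(Y)g(X,Z) + ω(FZ)g(X,FY) - ω(Z)g(X,Y) = 0 for all X,Y,Z ∈ V. Then ω(Y) = 0 for all Y, contradicting ω(ρ) = g(ρ,ρ) = -1; hence no such configuration exists. -/
/-!
An isometry `F` of `g` with `F² = -1` is skew-adjoint, so `g(ρ, Fρ) = -g(Fρ, ρ)`. Evaluating the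
identity at `X = Y = Z = ρ` therefore gives `-2 g(Fρ, ρ)² - 2 g(ρ, ρ)² = 0`, which forces
`g(ρ, ρ) = 0` and is impossible for a unit timelike `ρ`.
-/

namespace LinearMap

theorem IsOrthogonal.isSkewAdjoint {R M : Type*} [CommRing R] [AddCommGroup M] [Module R M]
    {B : LinearMap.BilinForm R M} {f : M →ₗ[R] M} (hf : B.IsOrthogonal f)
    (hff : ∀ x, f (f x) = -x) :
    B.IsSkewAdjoint f := fun x y => by
  calc B (f x) y = B (f x) (f (f (-y))) := by rw [hff, neg_neg]
    _ = B x (-f y) := by rw [hf, map_neg]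

theorem IsSkewAdjoint.apply_mul_apply_nonpos {R M : Type*} [CommRing R] [LinearOrder R]
    [IsStrictOrderedRing R] [AddCommGroup M] [Module R M] {B : LinearMap.BilinForm R M} {f : M → M}
    (hf : B.IsSkewAdjoint f) (x : M) : B (f x) x * B x (f x) ≤ 0 := by
  have hskew : B (f x) x = -B x (f x) := by rw [hf x x, Pi.neg_apply, map_neg]
  rw [hskew, neg_mul]
  exact neg_nonpos.mpr (mul_self_nonneg _)

end LinearMap

theorem weakly_ricci_symmetric_final_contradiction_general
    {V : Type*} [AddCommGroup V] [Module ℝ V]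
    (g : V →ₗ[ℝ] V →ₗ[ℝ] ℝ)
    (ρ : V) (hρ : g ρ ρ = -1)
    (F : V →ₗ[ℝ] V)
    (hF2 : ∀ X, F (F X) = -X)
    (hFg : ∀ X Y, g (F X) (F Y) = g X Y)
    (hkey : ∀ X Y Z, g (F Y) ρ * g X (F Z) - g Y ρ * g X Z
        + g (F Z) ρ * g X (F Y) - g Z ρ * g X Y = 0) :
    False := by
  have hskew : g.IsSkewAdjoint F := LinearMap.IsOrthogonal.isSkewAdjoint hFg hF2
  have hnonpos := hskew.apply_mul_apply_nonpos ρ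
  have hdiag := hkey ρ ρ ρ
  rw [hρ] at hdiag
  linarith

/-- The final contraction argument for weakly Ricci symmetric perfect fluid
Kähler space-times: the displayed identity forces `ω = 0`, contradicting
`ω(ρ) = g(ρ,ρ) = -1`; hence no such configuration exists. -/
theorem weakly_ricci_symmetric_final_contradiction
    {V : Type*} [AddCommGroup V] [Module ℝ V]
    (g : V →ₗ[ℝ] V →ₗ[ℝ] ℝ)
    (hgsymm : ∀ X Y, g X Y = g Y X)
    (hgnd : ∀ X, (∀ Y, g X Y = 0) → X = 0)
    (b : Module.Basis (Fin 4) ℝ V) (ε : Fin 4 → ℝ)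
    (hε : ∀ i, ε i = 1 ∨ ε i = -1)
    (hortho : ∀ i j, g (b i) (b j) = if i = j then ε i else 0)
    (ρ : V) (hρ : g ρ ρ = -1)
    (F : V →ₗ[ℝ] V)
    (hF2 : ∀ X, F (F X) = -X)
    (hFg : ∀ X Y, g (F X) (F Y) = g X Y)
    (hkey : ∀ X Y Z, g (F Y) ρ * g X (F Z) - g Y ρ * g X Z
        + g (F Z) ρ * g X (F Y) - g Z ρ * g X Y = 0) :
    False :=
  weakly_ricci_symmetric_final_contradiction_general g ρ hρ F hF2 hFg hkey
end
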